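/- The closed-form stationary distribution of the joint (source state, Version Innovation Age) chain under the randomized stationary policy satisfies the boundary balance equations p·π₀(0) = (1−p)·a·∑_{j≥1} π₀(j) + q·a·∑_{j≥0} π₁(j) and q·π₁(0) = (1−q)·a·∑_{j≥1} π₁(j) + p·a·∑_{j≥0} π₀(j), all the series being convergent. -/

import Mathlib

/-!
Along each parity class of the age, `π₀` and `π₁` are geometric with ratio
`t = p q (1 - a)² / (Φ(p) Φ(q))`, so both series converge and sum in closed form. Because
`Φ(p) Φ(q) - p q (1 - a)² = a (Φ(p) + q (1 - a))`, the totals are the stationary marginals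
`q / (p + q)` and `p / (p + q)` of the source. Each boundary equation then reduces to
`Φ(p) π₀(0) = a q / (p + q)` (resp. the same with `p` and `q` swapped), which is the closed form
of `π₀(0)`.
-/

noncomputable section

def viaPhi (a x : ℝ) : ℝ := x + (1 - x) * a

def viaRatio (a p q : ℝ) : ℝ := p * q * (1 - a) ^ 2 / (viaPhi a p * viaPhi a q)

/-- In natural-number division the paper's exponents are `kᵢ = (i + 1) / 2` and `wᵢ = i / 2 + 1`;
`π₀ = viaStationary a p q` and `π₁ = viaStationary a q p`. -/
def viaStationary (a p q : ℝ) (i : ℕ) : ℝ :=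
  p ^ ((i + 1) / 2) * q ^ (i / 2 + 1) * a * (1 - a) ^ i /
    ((p + q) * viaPhi a p ^ (i / 2 + 1) * viaPhi a q ^ ((i + 1) / 2))

end

lemma ite_even_div_two (i : ℕ) : (if Even i then i / 2 else (i + 1) / 2) = (i + 1) / 2 := by
  split_ifs with h
  · obtain ⟨r, rfl⟩ := h; omega
  · rfl

lemma ite_even_add_two_div_two (i : ℕ) :
    (if Even i then (i + 2) / 2 else (i + 1) / 2) = i / 2 + 1 := by
  split_ifs with h
  · omega
  · obtain ⟨r, rfl⟩ := Nat.not_even_iff_odd.mp h; omega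

lemma viaPhi_pos {a x : ℝ} (hx : 0 ≤ x) (ha : 0 < a) (ha1 : a ≤ 1) : 0 < viaPhi a x := by
  unfold viaPhi; nlinarith

theorem hasSum_of_even_odd_geometric {f : ℕ → ℝ} {u v t : ℝ} (ht : |t| < 1)
    (heven : ∀ m, f (2 * m) = u * t ^ m) (hodd : ∀ m, f (2 * m + 1) = v * t ^ m) :
    HasSum f ((u + v) / (1 - t)) := by
  have hgeom := hasSum_geometric_of_abs_lt_one ht
  rw [add_div, div_eq_mul_inv, div_eq_mul_inv]
  exact HasSum.even_add_odd (by simpa only [heven] using hgeom.mul_left u)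
    (by simpa only [hodd] using hgeom.mul_left v)

namespace viaRatio

variable {a p q : ℝ} (hp : 0 ≤ p) (hq : 0 ≤ q) (ha : 0 < a) (ha1 : a ≤ 1)
include hp hq ha ha1

lemma one_sub_eq :
    1 - viaRatio a p q = a * (viaPhi a p + q * (1 - a)) / (viaPhi a p * viaPhi a q) := by
  have hA := viaPhi_pos hp ha ha1
  have hB := viaPhi_pos hq ha ha1
  unfold viaRatio
  field_simp
  unfold viaPhi
  ring

lemma abs_lt_one : |viaRatio a p q| < 1 := by
  have hA := viaPhi_pos hp ha ha1
  have hB := viaPhi_pos hq ha ha1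
  have hgap : 0 < 1 - viaRatio a p q := by
    rw [one_sub_eq hp hq ha ha1]
    have : 0 < viaPhi a p + q * (1 - a) := by nlinarith
    positivity
  rw [abs_of_nonneg (by unfold viaRatio; positivity)]
  linarith

end viaRatio

namespace viaStationary

variable {a p q : ℝ}

lemma two_mul (m : ℕ) :
    viaStationary a p q (2 * m) = q * a / ((p + q) * viaPhi a p) * viaRatio a p q ^ m := by
  have h₁ : (2 * m + 1) / 2 = m := by omega
  have h₂ : 2 * m / 2 = m := by omega
  rw [viaStationary, viaRatio, h₁, h₂, div_pow, mul_pow, mul_pow, mul_pow, ← pow_mul]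
  generalize p + q = s
  ring

lemma two_mul_add_one (m : ℕ) :
    viaStationary a p q (2 * m + 1) =
      p * q * a * (1 - a) / ((p + q) * viaPhi a p * viaPhi a q) * viaRatio a p q ^ m := by
  have h₁ : (2 * m + 1 + 1) / 2 = m + 1 := by omega
  have h₂ : (2 * m + 1) / 2 = m := by omega
  rw [viaStationary, viaRatio, h₁, h₂, div_pow, mul_pow, mul_pow, mul_pow, ← pow_mul]
  generalize p + q = s
  ring

lemma zero : viaStationary a p q 0 = q * a / ((p + q) * viaPhi a p) := by
  simpa using two_mul (a := a) (p := p) (q := q) 0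

variable (hp : 0 ≤ p) (hq : 0 ≤ q) (ha : 0 < a) (ha1 : a ≤ 1)
include hp hq ha ha1

theorem hasSum (hpq : 0 < p + q) : HasSum (viaStationary a p q) (q / (p + q)) := by
  have hA := viaPhi_pos hp ha ha1
  have hB := viaPhi_pos hq ha ha1
  have : 0 < viaPhi a p + q * (1 - a) := by nlinarith
  convert hasSum_of_even_odd_geometric (viaRatio.abs_lt_one hp hq ha ha1) two_mul
    two_mul_add_one using 1
  rw [viaRatio.one_sub_eq hp hq ha ha1]
  field_simp
  unfold viaPhi
  ring

theorem balance (hpq : 0 < p + q) :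
    p * viaStationary a p q 0 =
      (1 - p) * a * ∑' j, viaStationary a p q (j + 1) + q * a * ∑' j, viaStationary a q p j := by
  have hqp : 0 < q + p := by linarith
  have htail := ((hasSum_nat_add_iff' 1).mpr (hasSum hp hq ha ha1 hpq)).tsum_eq
  rw [htail, (hasSum hq hp ha ha1 hqp).tsum_eq, Finset.sum_range_one, zero]
  have hA := viaPhi_pos hp ha ha1
  field_simp
  unfold viaPhi
  ring

end viaStationary

theorem via_boundary_balance_general (p q a : ℝ)
    (hp : 0 < p) (hq : 0 < q)
    (ha : 0 < a) (ha1 : a ≤ 1)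
    (Φ : ℝ → ℝ) (hΦ : ∀ x, Φ x = x + (1 - x) * a)
    (k w : ℕ → ℕ)
    (hk : ∀ i, k i = if Even i then i / 2 else (i + 1) / 2)
    (hw : ∀ i, w i = if Even i then (i + 2) / 2 else (i + 1) / 2)
    (π₀ π₁ : ℕ → ℝ)
    (hπ₀ : ∀ i, π₀ i = p ^ k i * q ^ w i * a * (1 - a) ^ i /
      ((p + q) * Φ p ^ w i * Φ q ^ k i))
    (hπ₁ : ∀ i, π₁ i = p ^ w i * q ^ k i * a * (1 - a) ^ i /
      ((p + q) * Φ p ^ k i * Φ q ^ w i)) :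
    Summable π₀ ∧ Summable π₁ ∧
    p * π₀ 0 = (1 - p) * a * (∑' j : ℕ, π₀ (j + 1)) + q * a * (∑' j : ℕ, π₁ j) ∧
    q * π₁ 0 = (1 - q) * a * (∑' j : ℕ, π₁ (j + 1)) + p * a * (∑' j : ℕ, π₀ j) := by
  obtain rfl : Φ = viaPhi a := funext hΦ
  have hπ₀' : π₀ = viaStationary a p q := funext fun i => by
    rw [hπ₀, hk, hw, ite_even_div_two, ite_even_add_two_div_two, viaStationary]
  have hπ₁' : π₁ = viaStationary a q p := funext fun i => by
    rw [hπ₁, hk, hw, ite_even_div_two, ite_even_add_two_div_two, viaStationary, add_comm q p]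
    ring
  subst hπ₀' hπ₁'
  have hpq : 0 < p + q := by positivity
  have hqp : 0 < q + p := by positivity
  exact ⟨(viaStationary.hasSum hp.le hq.le ha ha1 hpq).summable,
    (viaStationary.hasSum hq.le hp.le ha ha1 hqp).summable,
    viaStationary.balance hp.le hq.le ha ha1 hpq, viaStationary.balance hq.le hp.le ha ha1 hqp⟩

/-- Boundary balance equations for the stationary distribution of the joint
(source state, Version Innovation Age) chain under the randomized stationary policy,
all the series being convergent. -/
theorem via_boundary_balance (p q a : ℝ)
    (hp : 0 < p) (hp1 : p < 1) (hq : 0 < q) (hq1 : q < 1)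
    (ha : 0 < a) (ha1 : a ≤ 1)
    (Φ : ℝ → ℝ) (hΦ : ∀ x, Φ x = x + (1 - x) * a)
    (k w : ℕ → ℕ)
    (hk : ∀ i, k i = if Even i then i / 2 else (i + 1) / 2)
    (hw : ∀ i, w i = if Even i then (i + 2) / 2 else (i + 1) / 2)
    (π₀ π₁ : ℕ → ℝ)
    (hπ₀ : ∀ i, π₀ i = p ^ k i * q ^ w i * a * (1 - a) ^ i /
      ((p + q) * Φ p ^ w i * Φ q ^ k i))
    (hπ₁ : ∀ i, π₁ i = p ^ w i * q ^ k i * a * (1 - a) ^ i /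
      ((p + q) * Φ p ^ k i * Φ q ^ w i)) :
    Summable π₀ ∧ Summable π₁ ∧
    p * π₀ 0 = (1 - p) * a * (∑' j : ℕ, π₀ (j + 1)) + q * a * (∑' j : ℕ, π₁ j) ∧
    q * π₁ 0 = (1 - q) * a * (∑' j : ℕ, π₁ (j + 1)) + p * a * (∑' j : ℕ, π₀ j) :=
  via_boundary_balance_general p q a hp hq ha ha1 Φ hΦ k w hk hw π₀ π₁ hπ₀ hπ₁
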